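/- Let Ω ⊂ ℝ³ be a bounded domain (e.g. the 3-torus), T > 0, and let u ∈ L²(0,T;H¹) be divergence free. Suppose d ∈ L²(0,T;H¹(Ω,ℝ³)) is a smooth solution of ∂ₜd + u·∇d = Δd − (|d|²−1)d with initial data d₀ satisfying |d₀(x)| ≤ 1 for a.e. x ∈ Ω, with periodic boundary conditions. Then |d(x,t)| ≤ 1 for a.e. (x,t) ∈ Ω × [0,T]. -/

import Mathlib

open MeasureTheory Real Filter

noncomputable section

abbrev E3 := EuclideanSpace ℝ (Fin 3)

/-- The periodic box `[-D, D]^3`. -/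
def box (D : ℝ) : Set E3 := {x : E3 | ∀ i, |x i| ≤ D}

/-- Partial derivative in direction `i` of a scalar function. -/
def pd (i : Fin 3) (f : E3 → ℝ) (x : E3) : ℝ :=
  fderiv ℝ f x (EuclideanSpace.single i 1)

/-- Laplacian of a scalar function. -/
def lap (f : E3 → ℝ) (x : E3) : ℝ := ∑ i, pd i (fun y => pd i f y) x

/-- Divergence of a vector field. -/
def vdiv (u : E3 → Fin 3 → ℝ) (x : E3) : ℝ := ∑ i, pd i (fun y => u y i) x

/-- Gradient matrix of a vector field, `(∇u)_{ij} = ∂ᵢ uⱼ`. -/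
def vgrad (u : E3 → Fin 3 → ℝ) (x : E3) (i j : Fin 3) : ℝ := pd i (fun y => u y j) x

/-- Frobenius product `A : B`. -/
def frob (A B : Fin 3 → Fin 3 → ℝ) : ℝ := ∑ i, ∑ j, A i j * B i j

/-- Symmetric gradient `∇u + ∇ᵀu`. -/
def sgrad (u : E3 → Fin 3 → ℝ) (x : E3) (i j : Fin 3) : ℝ := vgrad u x i j + vgrad u x j i

/-- `(∇d ⊙ ∇d)_{ij} = ∂ᵢd · ∂ⱼd`. -/
def odot (d : E3 → Fin 3 → ℝ) (x : E3) (i j : Fin 3) : ℝ := ∑ k, vgrad d x i k * vgrad d x j k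

/-- Componentwise Laplacian of a vector field. -/
def vlap (u : E3 → Fin 3 → ℝ) (x : E3) (j : Fin 3) : ℝ := lap (fun y => u y j) x

/-- Convection term `(u · ∇v)_j`. -/
def conv (u v : E3 → Fin 3 → ℝ) (x : E3) (j : Fin 3) : ℝ := ∑ i, u x i * vgrad v x i j

/-- Periodicity with period `2D` in each coordinate direction. -/
def per (D : ℝ) {α : Type*} (f : E3 → α) : Prop :=
  ∀ (x : E3) (i : Fin 3), f (x + (2 * D) • (EuclideanSpace.single i 1 : E3)) = f x

/-- Squared euclidean norm of a vector in `ℝ³`. -/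
def nsq (v : Fin 3 → ℝ) : ℝ := ∑ k, (v k) ^ 2

open Topology

section Aux

lemma contDiff_pd {f : E3 → ℝ} (hf : ContDiff ℝ (⊤ : ℕ∞) f) (i : Fin 3) :
    ContDiff ℝ (⊤ : ℕ∞) (pd i f) :=
  (hf.fderiv_right (by simp)).clm_apply contDiff_const

lemma deriv2_nonpos {φ : ℝ → ℝ} (hφ : ContDiff ℝ (⊤ : ℕ∞) φ) (hmax : ∀ s, φ s ≤ φ 0) :
    deriv (deriv φ) 0 ≤ 0 := by
  by_contra hc
  push_neg at hc
  have hdiff : Differentiable ℝ φ := hφ.differentiable (by simp)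
  have hψd : Differentiable ℝ (deriv φ) :=
    ((contDiff_infty_iff_deriv.mp (hφ.of_le (by simp))).2).differentiable (by simp)
  have hψ : HasDerivAt (deriv φ) (deriv (deriv φ) 0) 0 := (hψd 0).hasDerivAt
  have hzero : deriv φ 0 = 0 :=
    IsLocalMax.deriv_eq_zero (Filter.Eventually.of_forall hmax)
  have hslope := hasDerivAt_iff_tendsto_slope.mp hψ
  have hev : ∀ᶠ t in 𝓝[≠] (0:ℝ), 0 < slope (deriv φ) 0 t :=
    hslope.eventually (eventually_gt_nhds hc)
  rw [eventually_nhdsWithin_iff, Metric.eventually_nhds_iff] at hev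
  obtain ⟨δ, hδ, hball⟩ := hev
  set h : ℝ := δ / 2 with hh
  have hh0 : 0 < h := by positivity
  obtain ⟨ξ, hξ, hξeq⟩ := exists_deriv_eq_slope φ hh0 (hdiff.continuous.continuousOn)
    (fun x _ => (hdiff x).differentiableWithinAt)
  have hξpos : 0 < deriv φ ξ := by
    have hd : dist ξ (0:ℝ) < δ := by
      rw [Real.dist_eq, sub_zero, abs_of_pos hξ.1]
      calc ξ < h := hξ.2
        _ < δ := by simpa [hh] using half_lt_self hδ
    have h2 : 0 < ξ⁻¹ * deriv φ ξ := by
      simpa [slope, hzero] using hball hd (ne_of_gt hξ.1)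
    nlinarith [hξ.1, inv_pos.mpr hξ.1]
  have hneg : deriv φ ξ ≤ 0 := by
    rw [hξeq]
    apply div_nonpos_of_nonpos_of_nonneg (sub_nonpos.mpr (hmax h)) (by linarith)
  linarith

end Aux

lemma pd_eq_zero_of_max {f : E3 → ℝ} {x : E3} (hmax : ∀ y, f y ≤ f x) (i : Fin 3) :
    pd i f x = 0 := by
  have h : IsLocalMax f x := Filter.Eventually.of_forall hmax
  rw [pd, h.fderiv_eq_zero]
  rfl

lemma pd_pd_nonpos_of_max {f : E3 → ℝ} (hf : ContDiff ℝ (⊤ : ℕ∞) f) {x : E3}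
    (hmax : ∀ y, f y ≤ f x) (i : Fin 3) : pd i (fun y => pd i f y) x ≤ 0 := by
  set v : E3 := EuclideanSpace.single i 1 with hv
  set L : ℝ → E3 := fun s => x + s • v with hL
  have hLd : ∀ s : ℝ, HasDerivAt L v s := by
    intro s
    have h1 : HasDerivAt (fun s : ℝ => s • v) ((1:ℝ) • v) s := (hasDerivAt_id s).smul_const v
    simpa [hL] using h1.const_add x
  have hLc : ContDiff ℝ (⊤ : ℕ∞) L := contDiff_const.add (contDiff_id.smul contDiff_const)
  have hL0 : L 0 = x := by simp [hL]
  set φ : ℝ → ℝ := fun s => f (L s) with hφdef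
  have hφ : ContDiff ℝ (⊤ : ℕ∞) φ := hf.comp hLc
  have hd1 : ∀ s, HasDerivAt φ (pd i f (L s)) s := fun s =>
    ((hf.differentiable (by simp) (L s)).hasFDerivAt).comp_hasDerivAt s (hLd s)
  have hderiv1 : deriv φ = fun s => pd i f (L s) := funext fun s => (hd1 s).deriv
  have hd2 : HasDerivAt (fun s => pd i f (L s)) (pd i (fun y => pd i f y) x) 0 := by
    have := (((contDiff_pd hf i).differentiable (by simp) (L 0)).hasFDerivAt).comp_hasDerivAt 0 (hLd 0)
    rw [hL0] at this
    exact this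
  have hmaxφ : ∀ s, φ s ≤ φ 0 := fun s => by simpa [hφdef, hL0] using hmax (L s)
  have := deriv2_nonpos hφ hmaxφ
  rwa [hderiv1, hd2.deriv] at this

lemma per_zsmul {α : Type*} {D : ℝ} {f : E3 → α} (hf : per D f) (i : Fin 3) (n : ℤ) :
    ∀ x : E3, f (x + ((n : ℝ) * (2 * D)) • (EuclideanSpace.single i 1 : E3)) = f x := by
  induction n using Int.induction_on with
  | zero => intro x; simp
  | succ k ih =>
      intro x
      have h1 : x + (((k:ℝ) + 1) * (2 * D)) • (EuclideanSpace.single i 1 : E3)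
          = (x + ((k:ℝ) * (2 * D)) • (EuclideanSpace.single i 1 : E3))
            + (2 * D) • (EuclideanSpace.single i 1 : E3) := by
        rw [add_assoc, ← add_smul]; ring_nf
      have ih' := ih x
      push_cast at ih' ⊢
      rw [h1, hf]
      exact ih'
  | pred k ih =>
      intro x
      have h1 : (x + ((-(k:ℝ) - 1) * (2 * D)) • (EuclideanSpace.single i 1 : E3))
            + (2 * D) • (EuclideanSpace.single i 1 : E3)
          = x + ((-(k:ℝ)) * (2 * D)) • (EuclideanSpace.single i 1 : E3) := by
        rw [add_assoc, ← add_smul]; ring_nf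
      have ih' := ih x
      push_cast at ih' ⊢
      have h2 := hf (x + ((-(k:ℝ) - 1) * (2 * D)) • (EuclideanSpace.single i 1 : E3)) i
      rw [h1] at h2
      calc f (x + ((-(k:ℝ) - 1) * (2 * D)) • (EuclideanSpace.single i 1 : E3))
          = f (x + ((-(k:ℝ)) * (2 * D)) • (EuclideanSpace.single i 1 : E3)) := h2.symm
        _ = f x := ih'

lemma exists_box_rep {α : Type*} {D : ℝ} (hD : 0 < D) {f : E3 → α} (hf : per D f) (z : E3) :
    ∃ y ∈ box D, f y = f z := by
  classical
  set n : Fin 3 → ℤ := fun i => -round (z i / (2 * D)) with hn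
  set c : Fin 3 → ℝ := fun i => (n i : ℝ) * (2 * D) with hc
  set y : E3 := z + c 0 • EuclideanSpace.single 0 1 + c 1 • EuclideanSpace.single 1 1
      + c 2 • EuclideanSpace.single 2 1 with hy
  have hfy : f y = f z := by
    rw [hy]
    rw [per_zsmul hf 2 (n 2), per_zsmul hf 1 (n 1), per_zsmul hf 0 (n 0)]
  have hyi : ∀ i : Fin 3, y i = z i + c i := by
    intro i
    fin_cases i <;>
      simp [hy, PiLp.add_apply, PiLp.smul_apply, EuclideanSpace.single_apply]
  refine ⟨y, ?_, hfy⟩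
  intro i
  rw [hyi i]
  have hr := abs_sub_round (z i / (2 * D))
  have h2D : (0:ℝ) < 2 * D := by linarith
  have : z i + c i = (2 * D) * (z i / (2 * D) - round (z i / (2 * D))) := by
    show z i + (n i : ℝ) * (2 * D) = _
    simp only [hn]
    push_cast
    have hzq : 2 * D * (z i / (2 * D)) = z i := by field_simp
    rw [mul_sub, hzq]
    ring
  rw [this, abs_mul, abs_of_pos h2D]
  calc 2 * D * |z i / (2 * D) - ↑(round (z i / (2 * D)))| ≤ 2 * D * (1/2) := by
        exact mul_le_mul_of_nonneg_left hr h2D.le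
    _ = D := by ring

lemma isClosed_box (D : ℝ) : IsClosed (box D) := by
  have : box D = ⋂ i : Fin 3, {x : E3 | |x i| ≤ D} := by
    ext x; simp [box, Set.mem_iInter]
  rw [this]
  refine isClosed_iInter fun i => ?_
  have hcont : Continuous fun x : E3 => |x i| :=
    (continuous_abs.comp (EuclideanSpace.proj (𝕜 := ℝ) i).continuous)
  exact isClosed_le hcont continuous_const

lemma isCompact_box {D : ℝ} (hD : 0 < D) : IsCompact (box D) := by
  refine Metric.isCompact_of_isClosed_isBounded (isClosed_box D) ?_
  rw [Metric.isBounded_iff_subset_closedBall 0]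
  refine ⟨Real.sqrt (3 * D ^ 2), fun x hx => ?_⟩
  simp only [Metric.mem_closedBall, dist_zero_right]
  rw [EuclideanSpace.norm_eq]
  apply Real.sqrt_le_sqrt
  have hterm : ∀ i : Fin 3, ‖x i‖ ^ 2 ≤ D ^ 2 := by
    intro i
    have h1 := hx i
    have h2 : ‖x i‖ = |x i| := rfl
    rw [h2]
    nlinarith [abs_nonneg (x i)]
  calc ∑ i, ‖x i‖ ^ 2 ≤ ∑ _i : Fin 3, D ^ 2 := Finset.sum_le_sum fun i _ => hterm i
    _ = 3 * D ^ 2 := by rw [Finset.sum_const]; simp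

lemma le_on_box_of_ae {g : E3 → ℝ} (hg : Continuous g) {D : ℝ} (hD : 0 < D)
    (h : ∀ᵐ x ∂(volume.restrict (box D)), g x ≤ 1) : ∀ x ∈ box D, g x ≤ 1 := by
  by_contra hcon
  push_neg at hcon
  obtain ⟨x₀, hx₀box, hx₀⟩ := hcon
  set U : Set E3 := g ⁻¹' Set.Ioi 1 with hU
  have hUopen : IsOpen U := isOpen_Ioi.preimage hg
  have hx₀U : x₀ ∈ U := hx₀
  obtain ⟨r, hr, hball⟩ := Metric.isOpen_iff.mp hUopen x₀ hx₀U
  -- pick a nearby point in the open box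
  set ε : ℝ := min (r / (2 * (‖x₀‖ + 1))) (1/2) with hε
  have hεpos : 0 < ε := by
    apply lt_min
    · positivity
    · norm_num
  have hεle : ε ≤ 1/2 := min_le_right _ _
  set x₁ : E3 := (1 - ε) • x₀ with hx₁
  have hdist : dist x₁ x₀ < r := by
    rw [dist_eq_norm, hx₁]
    have : (1 - ε) • x₀ - x₀ = (-ε) • x₀ := by
      rw [sub_smul, one_smul, neg_smul]; abel
    rw [this, norm_smul]
    simp only [norm_neg, Real.norm_eq_abs, abs_of_pos hεpos]
    have h1 : ε * ‖x₀‖ ≤ (r / (2 * (‖x₀‖ + 1))) * ‖x₀‖ :=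
      mul_le_mul_of_nonneg_right (min_le_left _ _) (norm_nonneg _)
    have h2 : (r / (2 * (‖x₀‖ + 1))) * ‖x₀‖ < r := by
      rw [div_mul_eq_mul_div, div_lt_iff₀ (by positivity)]
      nlinarith [norm_nonneg x₀]
    linarith
  have hx₁U : x₁ ∈ U := hball (by simpa [Metric.mem_ball] using hdist)
  have hx₁open : ∀ i, |x₁ i| < D := by
    intro i
    have : x₁ i = (1 - ε) * x₀ i := by simp [hx₁, PiLp.smul_apply]
    rw [this, abs_mul, abs_of_pos (by linarith : (0:ℝ) < 1 - ε)]
    calc (1 - ε) * |x₀ i| ≤ (1 - ε) * D :=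
          mul_le_mul_of_nonneg_left (hx₀box i) (by linarith)
      _ < 1 * D := by
          apply mul_lt_mul_of_pos_right _ hD
          linarith
      _ = D := one_mul D
  -- the open set V
  set V : Set E3 := U ∩ ⋂ i : Fin 3, {x : E3 | |x i| < D} with hV
  have hVopen : IsOpen V := by
    refine hUopen.inter (isOpen_iInter_of_finite fun i => ?_)
    have hcont : Continuous fun x : E3 => |x i| :=
      (continuous_abs.comp (EuclideanSpace.proj (𝕜 := ℝ) i).continuous)
    exact isOpen_lt hcont continuous_const
  have hVne : V.Nonempty := ⟨x₁, hx₁U, by simp [Set.mem_iInter]; exact hx₁open⟩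
  have hVpos : 0 < volume V := hVopen.measure_pos volume hVne
  have hnull : volume V = 0 := by
    have h' := (ae_restrict_iff' (isClosed_box D).measurableSet).mp h
    rw [MeasureTheory.ae_iff] at h'
    refine measure_mono_null ?_ h'
    intro x hx
    simp only [Set.mem_setOf_eq]
    push_neg
    refine ⟨fun i => le_of_lt ?_, ?_⟩
    · exact Set.mem_iInter.mp hx.2 i
    · exact hx.1
  rw [hnull] at hVpos
  exact lt_irrefl _ hVpos

lemma deriv_nonneg_of_left_le {g : ℝ → ℝ} {t₀ c : ℝ} (ht₀ : 0 < t₀)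
    (hg : HasDerivAt g c t₀) (h : ∀ t ∈ Set.Ico 0 t₀, g t ≤ g t₀) : 0 ≤ c := by
  have h1 := hasDerivAt_iff_tendsto_slope.mp hg
  have h2 : Tendsto (slope g t₀) (𝓝[<] t₀) (𝓝 c) :=
    h1.mono_left (nhdsWithin_mono _ fun y hy => ne_of_lt hy)
  refine ge_of_tendsto h2 ?_
  filter_upwards [Ico_mem_nhdsLT ht₀] with t ht
  rw [slope_def_field]
  have hnum : g t - g t₀ ≤ 0 := sub_nonpos.mpr (h t ht)
  have hden : t - t₀ < 0 := sub_neg.mpr ht.2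
  rw [div_nonneg_iff]
  right
  exact ⟨hnum, hden.le⟩

lemma pd_sum_sq (g : Fin 3 → E3 → ℝ) (hg : ∀ k, ContDiff ℝ (⊤ : ℕ∞) (g k)) (i : Fin 3) (x : E3) :
    pd i (fun y => (∑ k, g k y ^ 2) - 1) x = ∑ k, 2 * g k x * pd i (g k) x := by
  have hk : ∀ k, HasFDerivAt (g k) (fderiv ℝ (g k) x) x := fun k =>
    ((hg k).differentiable (by simp) x).hasFDerivAt
  have hsq : ∀ k, HasFDerivAt (fun y => g k y ^ 2) ((2 * g k x) • fderiv ℝ (g k) x) x := by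
    intro k
    have h2 : HasFDerivAt (fun y => g k y * g k y)
        (g k x • fderiv ℝ (g k) x + g k x • fderiv ℝ (g k) x) x := (hk k).mul (hk k)
    have h3 : (2 * g k x) • fderiv ℝ (g k) x
        = g k x • fderiv ℝ (g k) x + g k x • fderiv ℝ (g k) x := by
      rw [two_mul, add_smul]
    rw [h3]
    simpa [sq] using h2
  have hF : HasFDerivAt (fun y => (∑ k, g k y ^ 2) - 1)
      (∑ k, (2 * g k x) • fderiv ℝ (g k) x) x :=
    (HasFDerivAt.fun_sum fun k _ => hsq k).sub_const 1
  rw [pd, hF.fderiv]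
  simp only [ContinuousLinearMap.sum_apply, ContinuousLinearMap.smul_apply, smul_eq_mul]
  exact Finset.sum_congr rfl fun k _ => by rw [pd]

lemma pd_pd_sum_sq (g : Fin 3 → E3 → ℝ) (hg : ∀ k, ContDiff ℝ (⊤ : ℕ∞) (g k)) (i : Fin 3) (x : E3) :
    pd i (fun y => pd i (fun z => (∑ k, g k z ^ 2) - 1) y) x
      = ∑ k, 2 * (g k x * pd i (fun y => pd i (g k) y) x + pd i (g k) x * pd i (g k) x) := by
  have heq : (fun y => pd i (fun z => (∑ k, g k z ^ 2) - 1) y)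
      = fun y => ∑ k, 2 * (g k y * pd i (g k) y) := by
    funext y
    rw [pd_sum_sq g hg i y]
    exact Finset.sum_congr rfl fun k _ => by ring
  rw [heq]
  have hk : ∀ k, HasFDerivAt (g k) (fderiv ℝ (g k) x) x := fun k =>
    ((hg k).differentiable (by simp) x).hasFDerivAt
  have hpk : ∀ k, HasFDerivAt (pd i (g k)) (fderiv ℝ (pd i (g k)) x) x := fun k =>
    ((contDiff_pd (hg k) i).differentiable (by simp) x).hasFDerivAt
  have hterm : ∀ k, HasFDerivAt (fun y => 2 * (g k y * pd i (g k) y))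
      ((2:ℝ) • (g k x • fderiv ℝ (pd i (g k)) x + pd i (g k) x • fderiv ℝ (g k) x)) x :=
    fun k => ((hk k).mul (hpk k)).const_mul 2
  have hF : HasFDerivAt (fun y => ∑ k, 2 * (g k y * pd i (g k) y))
      (∑ k, (2:ℝ) • (g k x • fderiv ℝ (pd i (g k)) x + pd i (g k) x • fderiv ℝ (g k) x)) x :=
    HasFDerivAt.fun_sum fun k _ => hterm k
  rw [pd, hF.fderiv]
  simp only [ContinuousLinearMap.sum_apply, ContinuousLinearMap.smul_apply,
    ContinuousLinearMap.add_apply, smul_eq_mul]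
  exact Finset.sum_congr rfl fun k _ => by rw [pd, pd]

/-- Maximum principle: `|d| ≤ 1` is preserved by the transported penalized flow. -/
theorem stmt0 (D T : ℝ) (hD : 0 < D) (hT : 0 < T)
    (u d : ℝ → E3 → Fin 3 → ℝ)
    (hu : ContDiff ℝ (⊤ : ℕ∞) (fun q : ℝ × E3 => u q.1 q.2))
    (hudiv : ∀ t x, vdiv (u t) x = 0)
    (huper : ∀ t, per D (u t))
    (hd : ContDiff ℝ (⊤ : ℕ∞) (fun q : ℝ × E3 => d q.1 q.2))
    (hdper : ∀ t, per D (d t))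
    (hpde : ∀ t ∈ Set.Icc (0 : ℝ) T, ∀ (x : E3) (j : Fin 3),
      deriv (fun s => d s x j) t + conv (u t) (d t) x j
        = vlap (d t) x j - (nsq (d t x) - 1) * d t x j)
    (hinit : ∀ᵐ x ∂(volume.restrict (box D)), nsq (d 0 x) ≤ 1) :
    ∀ t ∈ Set.Icc (0 : ℝ) T,
      ∀ᵐ x ∂(volume.restrict (box D)), nsq (d t x) ≤ 1 := by
  classical
  have hdj : ∀ j : Fin 3, ContDiff ℝ (⊤ : ℕ∞) (fun q : ℝ × E3 => d q.1 q.2 j) := fun j =>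
    (contDiff_pi.mp hd) j
  have hdx : ∀ (t : ℝ) (j : Fin 3), ContDiff ℝ (⊤ : ℕ∞) (fun x : E3 => d t x j) := fun t j =>
    (hdj j).comp (contDiff_const.prodMk contDiff_id)
  have hdt : ∀ (x : E3) (j : Fin 3), ContDiff ℝ (⊤ : ℕ∞) (fun s : ℝ => d s x j) := fun x j =>
    (hdj j).comp (contDiff_id.prodMk contDiff_const)
  set f : ℝ → E3 → ℝ := fun t x => nsq (d t x) - 1 with hfdef
  have hFcont : Continuous (fun q : ℝ × E3 => f q.1 q.2) := by
    have h1 : Continuous (fun q : ℝ × E3 => ∑ k, d q.1 q.2 k ^ 2) :=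
      continuous_finset_sum _ fun k _ => ((hdj k).continuous).pow 2
    exact h1.sub continuous_const
  have hinit' : ∀ x ∈ box D, f 0 x ≤ 0 := by
    have hgc : Continuous fun x => nsq (d 0 x) := by
      exact continuous_finset_sum _ fun k _ => ((hdx 0 k).continuous).pow 2
    intro x hx
    have := le_on_box_of_ae hgc hD hinit x hx
    simp only [hfdef]
    linarith
  have hfper : ∀ t, per D (f t) := by
    intro t x i
    simp only [hfdef, nsq]
    rw [hdper t x i]
  -- key claim
  have key : ∀ ε : ℝ, 0 < ε → ∀ t ∈ Set.Icc (0:ℝ) T, ∀ x ∈ box D, f t x < ε := by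
    intro ε hε
    by_contra hcon
    push_neg at hcon
    obtain ⟨t₁, ht₁, x₁, hx₁, hge1⟩ := hcon
    set K : Set (ℝ × E3) := (Set.Icc 0 T ×ˢ box D) ∩ {q : ℝ × E3 | ε ≤ f q.1 q.2} with hK
    have hKcomp : IsCompact K :=
      ((isCompact_Icc).prod (isCompact_box hD)).inter_right
        (isClosed_le continuous_const hFcont)
    set A : Set ℝ := Prod.fst '' K with hA
    have hAcomp : IsCompact A := hKcomp.image continuous_fst
    have hAne : A.Nonempty := ⟨t₁, ⟨(t₁, x₁), ⟨⟨ht₁, hx₁⟩, hge1⟩, rfl⟩⟩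
    set t₀ : ℝ := sInf A with ht₀def
    have ht₀A : t₀ ∈ A := hAcomp.sInf_mem hAne
    obtain ⟨⟨t₀', x'⟩, hq, hfst⟩ := ht₀A
    have ht' : t₀' = t₀ := hfst
    subst ht'
    have ht₀Icc : t₀ ∈ Set.Icc 0 T := hq.1.1
    have hx'box : x' ∈ box D := hq.1.2
    have hx'ge : ε ≤ f t₀ x' := hq.2
    have ht₀pos : 0 < t₀ := by
      rcases lt_or_eq_of_le ht₀Icc.1 with h | h
      · exact h
      · exfalso
        have := hinit' x' hx'box
        rw [← h] at hx'ge
        linarith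
    -- max point over the box
    obtain ⟨x₀, hx₀box, hx₀max⟩ := (isCompact_box hD).exists_isMaxOn
      ⟨0, fun i => by simp; linarith⟩
      ((hFcont.comp (Continuous.prodMk_right t₀)).continuousOn)
    have hgmax : ∀ z, f t₀ z ≤ f t₀ x₀ := by
      intro z
      obtain ⟨y, hybox, hyz⟩ := exists_box_rep hD (hfper t₀) z
      rw [← hyz]
      exact hx₀max hybox
    have hx₀ge : ε ≤ f t₀ x₀ := le_trans hx'ge (hgmax x')
    -- before t₀ the function is small
    have hIco : ∀ t ∈ Set.Ico 0 t₀, f t x₀ ≤ f t₀ x₀ := by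
      intro t ht
      by_contra hgt
      push_neg at hgt
      have htA : t ∈ A := by
        refine ⟨(t, x₀), ⟨⟨⟨ht.1, le_trans ht.2.le ht₀Icc.2⟩, hx₀box⟩, ?_⟩, rfl⟩
        exact le_trans hx₀ge hgt.le
      have : t₀ ≤ t := csInf_le hAcomp.bddBelow htA
      exact absurd this (not_le.mpr ht.2)
    -- spatial analysis at the max point
    set g3 : Fin 3 → E3 → ℝ := fun k x => d t₀ x k with hg3def
    have hg3 : ∀ k, ContDiff ℝ (⊤ : ℕ∞) (g3 k) := fun k => hdx t₀ k
    have hF₀eq : ∀ z, f t₀ z = (∑ k, g3 k z ^ 2) - 1 := fun z => rfl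
    have hF₀cd : ContDiff ℝ (⊤ : ℕ∞) (fun y => (∑ k, g3 k y ^ 2) - 1) :=
      (ContDiff.sum fun k _ => (hg3 k).pow 2).sub contDiff_const
    have hgmax' : ∀ z, (∑ k, g3 k z ^ 2) - 1 ≤ (∑ k, g3 k x₀ ^ 2) - 1 := by
      intro z
      have h := hgmax z
      rw [hF₀eq z, hF₀eq x₀] at h
      exact h
    have hpd0 : ∀ i, ∑ k, 2 * g3 k x₀ * pd i (g3 k) x₀ = 0 := by
      intro i
      rw [← pd_sum_sq g3 hg3 i x₀]
      exact pd_eq_zero_of_max hgmax' i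
    have hpdhalf : ∀ i, ∑ k, g3 k x₀ * pd i (g3 k) x₀ = 0 := by
      intro i
      have h2 : (2:ℝ) * ∑ k, g3 k x₀ * pd i (g3 k) x₀
          = ∑ k, 2 * g3 k x₀ * pd i (g3 k) x₀ := by
        rw [Finset.mul_sum]
        exact Finset.sum_congr rfl fun k _ => by ring
      have h3 := hpd0 i
      rw [← h2] at h3
      linarith
    have hpp : ∀ i, ∑ k, 2 * (g3 k x₀ * pd i (fun y => pd i (g3 k) y) x₀
        + pd i (g3 k) x₀ * pd i (g3 k) x₀) ≤ 0 := by
      intro i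
      rw [← pd_pd_sum_sq g3 hg3 i x₀]
      exact pd_pd_nonpos_of_max hF₀cd hgmax' i
    have hvl : ∀ k, vlap (d t₀) x₀ k = ∑ i, pd i (fun y => pd i (g3 k) y) x₀ :=
      fun k => rfl
    have hvlap : ∑ k, g3 k x₀ * vlap (d t₀) x₀ k ≤ 0 := by
      have hsum : ∑ i, ∑ k, 2 * (g3 k x₀ * pd i (fun y => pd i (g3 k) y) x₀
          + pd i (g3 k) x₀ * pd i (g3 k) x₀) ≤ 0 :=
        Finset.sum_nonpos fun i _ => hpp i
      have hexp : ∑ i, ∑ k, 2 * (g3 k x₀ * pd i (fun y => pd i (g3 k) y) x₀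
          + pd i (g3 k) x₀ * pd i (g3 k) x₀)
          = 2 * (∑ k, g3 k x₀ * vlap (d t₀) x₀ k)
            + 2 * ∑ i, ∑ k, pd i (g3 k) x₀ ^ 2 := by
        have step1 : ∀ i : Fin 3, ∑ k, 2 * (g3 k x₀ * pd i (fun y => pd i (g3 k) y) x₀
            + pd i (g3 k) x₀ * pd i (g3 k) x₀)
            = (∑ k, 2 * (g3 k x₀ * pd i (fun y => pd i (g3 k) y) x₀))
              + ∑ k, 2 * pd i (g3 k) x₀ ^ 2 := by
          intro i
          rw [← Finset.sum_add_distrib]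
          exact Finset.sum_congr rfl fun k _ => by ring
        calc ∑ i, ∑ k, 2 * (g3 k x₀ * pd i (fun y => pd i (g3 k) y) x₀
              + pd i (g3 k) x₀ * pd i (g3 k) x₀)
            = ∑ i, ((∑ k, 2 * (g3 k x₀ * pd i (fun y => pd i (g3 k) y) x₀))
              + ∑ k, 2 * pd i (g3 k) x₀ ^ 2) := Finset.sum_congr rfl fun i _ => step1 i
          _ = (∑ i, ∑ k, 2 * (g3 k x₀ * pd i (fun y => pd i (g3 k) y) x₀))
              + ∑ i, ∑ k, 2 * pd i (g3 k) x₀ ^ 2 := Finset.sum_add_distrib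
          _ = (∑ k, ∑ i, 2 * (g3 k x₀ * pd i (fun y => pd i (g3 k) y) x₀))
              + ∑ i, ∑ k, 2 * pd i (g3 k) x₀ ^ 2 := by rw [Finset.sum_comm]
          _ = 2 * (∑ k, g3 k x₀ * vlap (d t₀) x₀ k)
              + 2 * ∑ i, ∑ k, pd i (g3 k) x₀ ^ 2 := by
            congr 1
            · rw [Finset.mul_sum]
              refine Finset.sum_congr rfl fun k _ => ?_
              rw [hvl k, Finset.mul_sum, Finset.mul_sum]
            · rw [Finset.mul_sum]
              refine Finset.sum_congr rfl fun i _ => ?_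
              rw [Finset.mul_sum]
      have hsq2 : 0 ≤ ∑ i, ∑ k, pd i (g3 k) x₀ ^ 2 :=
        Finset.sum_nonneg fun i _ => Finset.sum_nonneg fun k _ => sq_nonneg _
      rw [hexp] at hsum
      linarith
    have hcv : ∀ k, conv (u t₀) (d t₀) x₀ k = ∑ i, u t₀ x₀ i * pd i (g3 k) x₀ :=
      fun k => rfl
    have hconv : ∑ k, g3 k x₀ * conv (u t₀) (d t₀) x₀ k = 0 := by
      simp only [hcv, Finset.mul_sum]
      rw [Finset.sum_comm]
      refine Finset.sum_eq_zero fun i _ => ?_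
      have h4 := hpdhalf i
      calc ∑ k, g3 k x₀ * (u t₀ x₀ i * pd i (g3 k) x₀)
          = u t₀ x₀ i * ∑ k, g3 k x₀ * pd i (g3 k) x₀ := by
            rw [Finset.mul_sum]
            exact Finset.sum_congr rfl fun k _ => by ring
        _ = 0 := by rw [h4, mul_zero]
    -- time derivative
    set Dk : Fin 3 → ℝ := fun k => deriv (fun s => d s x₀ k) t₀ with hDkdef
    have hDkdiff : ∀ k, HasDerivAt (fun s => d s x₀ k) (Dk k) t₀ := fun k =>
      ((hdt x₀ k).differentiable (by simp) t₀).hasDerivAt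
    have hgder : HasDerivAt (fun s => f s x₀) (∑ k, 2 * d t₀ x₀ k * Dk k) t₀ := by
      have hsum : HasDerivAt (fun s => ∑ k, d s x₀ k ^ 2)
          (∑ k, 2 * d t₀ x₀ k * Dk k) t₀ := by
        refine HasDerivAt.fun_sum fun k _ => ?_
        have h5 := (hDkdiff k).fun_pow 2
        norm_num at h5
        convert h5 using 1
        all_goals ring
      exact hsum.sub_const 1
    have hge0 : 0 ≤ ∑ k, 2 * d t₀ x₀ k * Dk k :=
      deriv_nonneg_of_left_le ht₀pos hgder hIco
    have hDkeq : ∀ k, Dk k = vlap (d t₀) x₀ k - (nsq (d t₀ x₀) - 1) * d t₀ x₀ k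
        - conv (u t₀) (d t₀) x₀ k := by
      intro k
      have h6 := hpde t₀ ht₀Icc x₀ k
      simp only [hDkdef]
      linarith
    set N : ℝ := nsq (d t₀ x₀) with hNdef
    have hNge : 1 + ε ≤ N := by
      have h7 := hx₀ge
      simp only [hfdef] at h7
      linarith
    have hNsum : N = ∑ k, g3 k x₀ ^ 2 := rfl
    have hfinal : ∑ k, 2 * d t₀ x₀ k * Dk k
        = 2 * (∑ k, g3 k x₀ * vlap (d t₀) x₀ k) - 2 * (N - 1) * N
          - 2 * (∑ k, g3 k x₀ * conv (u t₀) (d t₀) x₀ k) := by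
      have h1 : ∀ k, 2 * d t₀ x₀ k * Dk k
          = 2 * (g3 k x₀ * vlap (d t₀) x₀ k) - (2 * (N - 1)) * (g3 k x₀ ^ 2)
            - 2 * (g3 k x₀ * conv (u t₀) (d t₀) x₀ k) := by
        intro k
        rw [hDkeq k]
        simp only [hg3def, hNdef]
        ring
      rw [Finset.sum_congr rfl fun k _ => h1 k]
      rw [Finset.sum_sub_distrib, Finset.sum_sub_distrib,
        ← Finset.mul_sum, ← Finset.mul_sum, ← Finset.mul_sum, hNsum]
      all_goals ring
    rw [hfinal, hconv] at hge0
    nlinarith [hvlap, hNge, hε]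
  -- conclusion
  intro t ht
  refine (ae_restrict_iff' (isClosed_box D).measurableSet).mpr (ae_of_all _ ?_)
  intro x hx
  by_contra hgt
  push_neg at hgt
  have h8 := key (nsq (d t x) - 1) (by linarith) t ht x hx
  simp only [hfdef] at h8
  linarith
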